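/- arXiv:2007.04169 — 9 statements merged into one kernel-verified Lean document; each statement's English description precedes it below -/
import Mathlib

section
/- Let n ≥ 1 and let φ be any attribution method, i.e. a map assigning to every model f : (Fin n → ℝ) → ℝ and every pair of points a, b ∈ ℝⁿ a vector φ(f,a,b) ∈ ℝⁿ, which satisfies: (Efficiency) ∑_{i} φ_i(f,a,b) = f(b) − f(a) for all f, a, b; (Linearity) φ(α·f + β·g, a, b) = α·φ(f,a,b) + β·φ(g,a,b) for all f, g, α, β ∈ ℝ; and (Dummy) φ_i(f,a,b) = 0 whenever f does not depend on coordinate i, i.e. f(x) = f(y) for all x, y with x_j = y_j for every j ≠ i. Then for every feature-separable model f(x) = c + ∑_{i} f_i(x_i), with c ∈ ℝ and f_i : ℝ → ℝ, the attributions are uniquely determined: φ_i(f,a,b) = f_i(b_i) − f_i(a_i) for every i and all points a, b. -/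
/-! Linearity and Dummy make `φ(·, a, b)_i` an additive functional that kills constants and every
summand `x ↦ f_j (x_j)` with `j ≠ i`; so only the `i`-th summand contributes at coordinate `i`,
and Efficiency pins its attribution down, since it is the only nonzero term of its own sum. -/

open Finset

namespace Attribution

variable {ι : Type*} (φ : ((ι → ℝ) → ℝ) → (ι → ℝ) → (ι → ℝ) → ι → ℝ)

def coordHom
    (hLin : ∀ (f g : (ι → ℝ) → ℝ) (α β : ℝ) (a b : ι → ℝ) (i : ι),
      φ (fun x => α * f x + β * g x) a b i = α * φ f a b i + β * φ g a b i)
    (a b : ι → ℝ) (k : ι) : ((ι → ℝ) → ℝ) →+ ℝ :=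
  AddMonoidHom.mk' (fun f => φ f a b k) fun f g => by
    simpa only [one_mul, Pi.add_def] using hLin f g 1 1 a b k

variable {φ}

theorem eq_zero_of_depends_on_single
    (hDummy : ∀ (f : (ι → ℝ) → ℝ) (i : ι),
      (∀ x y : ι → ℝ, (∀ j, j ≠ i → x j = y j) → f x = f y) →
      ∀ a b : ι → ℝ, φ f a b i = 0)
    {j k : ι} (hkj : k ≠ j) (h : ℝ → ℝ) (a b : ι → ℝ) :
    φ (fun x => h (x j)) a b k = 0 :=
  hDummy _ k (fun _ _ hxy => by rw [hxy j hkj.symm]) a b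

theorem eq_zero_of_const
    (hDummy : ∀ (f : (ι → ℝ) → ℝ) (i : ι),
      (∀ x y : ι → ℝ, (∀ j, j ≠ i → x j = y j) → f x = f y) →
      ∀ a b : ι → ℝ, φ f a b i = 0)
    (c : ℝ) (a b : ι → ℝ) (k : ι) :
    φ (fun _ => c) a b k = 0 :=
  hDummy _ k (fun _ _ _ => rfl) a b

theorem eq_sub_of_depends_on_single [Fintype ι]
    (hEff : ∀ (f : (ι → ℝ) → ℝ) (a b : ι → ℝ), ∑ i, φ f a b i = f b - f a)
    (hDummy : ∀ (f : (ι → ℝ) → ℝ) (i : ι),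
      (∀ x y : ι → ℝ, (∀ j, j ≠ i → x j = y j) → f x = f y) →
      ∀ a b : ι → ℝ, φ f a b i = 0)
    (i : ι) (h : ℝ → ℝ) (a b : ι → ℝ) :
    φ (fun x => h (x i)) a b i = h (b i) - h (a i) := by
  rw [← hEff (fun x => h (x i)) a b, sum_eq_single_of_mem i (mem_univ i)]
  exact fun k _ hki => eq_zero_of_depends_on_single hDummy hki h a b

end Attribution

open Attribution in
theorem separable_attribution_unique_general (n : ℕ)
    (φ : ((Fin n → ℝ) → ℝ) → (Fin n → ℝ) → (Fin n → ℝ) → Fin n → ℝ)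
    (hEff : ∀ (f : (Fin n → ℝ) → ℝ) (a b : Fin n → ℝ),
      ∑ i, φ f a b i = f b - f a)
    (hLin : ∀ (f g : (Fin n → ℝ) → ℝ) (α β : ℝ) (a b : Fin n → ℝ) (i : Fin n),
      φ (fun x => α * f x + β * g x) a b i = α * φ f a b i + β * φ g a b i)
    (hDummy : ∀ (f : (Fin n → ℝ) → ℝ) (i : Fin n),
      (∀ x y : Fin n → ℝ, (∀ j, j ≠ i → x j = y j) → f x = f y) →
      ∀ a b : Fin n → ℝ, φ f a b i = 0)
    (c : ℝ) (fs : Fin n → ℝ → ℝ) (a b : Fin n → ℝ) (i : Fin n) :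
    φ (fun x => c + ∑ j, fs j (x j)) a b i = fs i (b i) - fs i (a i) := by
  have hsplit : (fun x : Fin n → ℝ => c + ∑ j, fs j (x j)) =
      (fun _ => c) + ∑ j, fun x : Fin n → ℝ => fs j (x j) := by
    ext x; simp
  have hφ := congrArg (coordHom φ hLin a b i) hsplit
  rw [map_add, map_sum] at hφ
  simp only [coordHom, AddMonoidHom.mk'_apply] at hφ
  rw [hφ, eq_zero_of_const hDummy, zero_add, sum_eq_single_of_mem i (mem_univ i)
    fun j _ hji => eq_zero_of_depends_on_single hDummy hji.symm (fs j) a b]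
  exact eq_sub_of_depends_on_single hEff hDummy i (fs i) a b

theorem separable_attribution_unique (n : ℕ) (hn : 1 ≤ n)
    (φ : ((Fin n → ℝ) → ℝ) → (Fin n → ℝ) → (Fin n → ℝ) → Fin n → ℝ)
    (hEff : ∀ (f : (Fin n → ℝ) → ℝ) (a b : Fin n → ℝ),
      ∑ i, φ f a b i = f b - f a)
    (hLin : ∀ (f g : (Fin n → ℝ) → ℝ) (α β : ℝ) (a b : Fin n → ℝ) (i : Fin n),
      φ (fun x => α * f x + β * g x) a b i = α * φ f a b i + β * φ g a b i)
    (hDummy : ∀ (f : (Fin n → ℝ) → ℝ) (i : Fin n),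
      (∀ x y : Fin n → ℝ, (∀ j, j ≠ i → x j = y j) → f x = f y) →
      ∀ a b : Fin n → ℝ, φ f a b i = 0)
    (c : ℝ) (fs : Fin n → ℝ → ℝ) (a b : Fin n → ℝ) (i : Fin n) :
    φ (fun x => c + ∑ j, fs j (x j)) a b i = fs i (b i) - fs i (a i) :=
  separable_attribution_unique_general n φ hEff hLin hDummy c fs a b i
end

section
/- Let n ≥ 1, c ∈ ℝ, f_i : ℝ → ℝ continuously differentiable for each i ∈ Fin n, and m : Fin n → Fin n → ℝ. Define the model f(x) = c + ∑_{i} f_i(x_i) + ∑_{i} ∑_{j} m_{ij}·x_i·x_j. Then for all points a, b ∈ ℝⁿ and every feature i, the Integrated Gradients attribution along the straight-line path equals the interventional Shapley value: IG_i(f,a,b) = BS_i(f,b,a) (with b the explanation point and a the reference point). -/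
def patch {n : ℕ} (x r : Fin n → ℝ) (S : Finset (Fin n)) : Fin n → ℝ :=
  fun j => if j ∈ S then x j else r j

noncomputable def BS {n : ℕ} (f : (Fin n → ℝ) → ℝ) (x r : Fin n → ℝ) (i : Fin n) : ℝ :=
  ∑ S ∈ (Finset.univ.erase i).powerset,
    ((S.card.factorial * (n - S.card - 1).factorial : ℝ) / (n.factorial : ℝ)) *
      (f (patch x r (insert i S)) - f (patch x r S))

noncomputable def IG {n : ℕ} (f : (Fin n → ℝ) → ℝ) (a b : Fin n → ℝ) (i : Fin n) : ℝ :=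
  (b i - a i) * ∫ t in (0:ℝ)..1, fderiv ℝ f (fun j => a j + t * (b j - a j)) (Pi.single i 1)

/-!
Both attributions equal `fᵢ(bᵢ) - fᵢ(aᵢ) + (bᵢ - aᵢ) · ∂ᵢQ((a + b) / 2)`, where `Q` is the
quadratic part of the model.

For IG this is the fundamental theorem of calculus for `fᵢ`, together with the fact that `∂ᵢQ` is
affine, so its mean along the segment from `a` to `b` is its value at the midpoint.

For the Shapley value, switching feature `i` on changes the model by an amount that is affine in the
patched point. The Shapley weights average the patched points to the midpoint of `a` and `b`,
except in coordinate `i`, where the value stays `aᵢ`. The discrepancy this causes in coordinate `i`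
is cancelled exactly by the `mᵢᵢ (bᵢ - aᵢ)²` term of the marginal contribution.
-/

open Finset

noncomputable def shapleyWeight (n k : ℕ) : ℝ := k.factorial * (n - k - 1).factorial / n.factorial

theorem shapleyWeight_succ (k s : ℕ) :
    shapleyWeight (k + 1) s = s.factorial * (k - s).factorial / (k + 1).factorial := by
  rw [shapleyWeight, Nat.sub_right_comm, Nat.add_sub_cancel_right]

theorem sum_powerset_shapleyWeight {α : Type*} (T : Finset α) :
    ∑ S ∈ T.powerset, shapleyWeight (#T + 1) #S = 1 := by
  rw [sum_powerset_apply_card]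
  have hterm : ∀ k ∈ range (#T + 1),
      (#T).choose k • shapleyWeight (#T + 1) k = 1 / (#T + 1) := by
    intro k hk
    have hk : k ≤ #T := Nat.lt_succ_iff.mp (mem_range.mp hk)
    have hchoose : ((#T).choose k : ℝ) ≠ 0 := Nat.cast_ne_zero.mpr (Nat.choose_pos hk).ne'
    rw [shapleyWeight_succ, nsmul_eq_mul, Nat.factorial_succ,
      ← Nat.choose_mul_factorial_mul_factorial hk]
    push_cast
    field_simp
  rw [sum_congr rfl hterm, sum_const, card_range, nsmul_eq_mul]
  push_cast
  field_simp

theorem shapleyWeight_succ_sub {k s : ℕ} (hs : s ≤ k) :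
    shapleyWeight (k + 1) (k - s) = shapleyWeight (k + 1) s := by
  rw [shapleyWeight_succ, shapleyWeight_succ, Nat.sub_sub_self hs, mul_comm]

theorem sum_powerset_filter_mem_shapleyWeight {α : Type*} [DecidableEq α] {T : Finset α} {j : α}
    (hj : j ∈ T) :
    ∑ S ∈ T.powerset with j ∈ S, shapleyWeight (#T + 1) #S = 1 / 2 := by
  -- `S ↦ T \ S` swaps the two halves and preserves the weights
  have hcompl : ∑ S ∈ T.powerset with j ∈ S, shapleyWeight (#T + 1) #S
      = ∑ S ∈ T.powerset with j ∉ S, shapleyWeight (#T + 1) #S := by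
    refine sum_nbij' (T \ ·) (T \ ·) ?_ ?_ ?_ ?_ ?_ <;> simp only [mem_filter, mem_powerset]
    · intro S hS; simp [hj, hS.2]
    · intro S hS; simp [hj, hS.2]
    · intro S hS; exact Finset.sdiff_sdiff_eq_self hS.1
    · intro S hS; exact Finset.sdiff_sdiff_eq_self hS.1
    · intro S hS
      rw [card_sdiff_of_subset hS.1, shapleyWeight_succ_sub (card_le_card hS.1)]
  have htotal := sum_powerset_shapleyWeight T
  rw [← sum_filter_add_sum_filter_not _ (j ∈ ·), ← hcompl] at htotal
  linarith

theorem sum_powerset_filter_notMem_shapleyWeight {α : Type*} [DecidableEq α] {T : Finset α}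
    {j : α} (hj : j ∈ T) :
    ∑ S ∈ T.powerset with j ∉ S, shapleyWeight (#T + 1) #S = 1 / 2 := by
  have htotal := sum_powerset_shapleyWeight T
  rw [← sum_filter_add_sum_filter_not _ (j ∈ ·), sum_powerset_filter_mem_shapleyWeight hj]
    at htotal
  linarith

theorem update_apply_eq_add_ite {ι : Type*} [DecidableEq ι] (y : ι → ℝ) (i : ι) (u : ℝ) (p : ι) :
    Function.update y i u p = y p + if p = i then u - y i else 0 := by
  by_cases hp : p = i
  · subst hp; simp
  · simp [hp]

theorem dotProduct_update {ι : Type*} [Fintype ι] [DecidableEq ι] (β v : ι → ℝ) (i : ι) (u : ℝ) :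
    β ⬝ᵥ Function.update v i u = β ⬝ᵥ v + β i * (u - v i) := by
  simp only [dotProduct, update_apply_eq_add_ite, mul_add, sum_add_distrib, mul_ite, mul_zero,
    sum_ite_eq', mem_univ, if_true]

theorem sum_apply_update_sub {ι : Type*} [Fintype ι] [DecidableEq ι] (g : ι → ℝ → ℝ)
    (y : ι → ℝ) (i : ι) (u : ℝ) :
    ∑ p, g p (Function.update y i u p) - ∑ p, g p (y p) = g i u - g i (y i) := by
  rw [← sum_sub_distrib, sum_eq_single i (fun p _ hp => by simp [hp]) (by simp)]
  simp

theorem quadratic_update_sub {ι : Type*} [Fintype ι] [DecidableEq ι] (m : ι → ι → ℝ)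
    (y : ι → ℝ) (i : ι) (u : ℝ) :
    ∑ p, ∑ q, m p q * Function.update y i u p * Function.update y i u q
        - ∑ p, ∑ q, m p q * y p * y q
      = (u - y i) * ((fun j => m i j + m j i) ⬝ᵥ y) + (u - y i) ^ 2 * m i i := by
  simp only [update_apply_eq_add_ite]
  generalize u - y i = d
  simp only [mul_add, add_mul, mul_ite, ite_mul, mul_zero, zero_mul, sum_add_distrib,
    sum_ite_eq', mem_univ, if_true, dotProduct, sum_ite_irrel, sum_const_zero, mul_sum]
  simp only [mul_comm, mul_left_comm]
  ring

section Patch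

variable {n : ℕ} (x r : Fin n → ℝ)

theorem patch_insert (S : Finset (Fin n)) (i : Fin n) :
    patch x r (insert i S) = Function.update (patch x r S) i (x i) := by
  ext j
  by_cases hj : j = i
  · subst hj; simp [patch]
  · simp [patch, hj]

theorem patch_apply_of_notMem {S : Finset (Fin n)} {j : Fin n} (hj : j ∉ S) :
    patch x r S j = r j :=
  if_neg hj

theorem shapleyWeight_eq_card_erase (i : Fin n) :
    shapleyWeight n = shapleyWeight (#(univ.erase i) + 1) := by
  rw [card_erase_of_mem (mem_univ i), card_univ, Fintype.card_fin, Nat.sub_add_cancel i.pos]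

theorem sum_shapleyWeight_smul_patch (i : Fin n) :
    ∑ S ∈ (univ.erase i).powerset, shapleyWeight n #S • patch x r S
      = Function.update (midpoint ℝ x r) i (r i) := by
  rw [shapleyWeight_eq_card_erase i]
  ext j
  simp only [Finset.sum_apply, Pi.smul_apply, smul_eq_mul]
  by_cases hj : j = i
  · subst hj
    have hr : ∀ S ∈ (univ.erase j).powerset,
        shapleyWeight (#(univ.erase j) + 1) #S * patch x r S j
          = shapleyWeight (#(univ.erase j) + 1) #S * r j := fun S hS => by
      rw [patch_apply_of_notMem x r fun h => notMem_erase j univ (mem_powerset.mp hS h)]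
    rw [sum_congr rfl hr, ← sum_mul, sum_powerset_shapleyWeight, one_mul,
      Function.update_self]
  · have hjT : j ∈ univ.erase i := mem_erase.mpr ⟨hj, mem_univ j⟩
    simp only [patch, mul_ite]
    rw [sum_ite, ← sum_mul, ← sum_mul, sum_powerset_filter_mem_shapleyWeight hjT,
      sum_powerset_filter_notMem_shapleyWeight hjT, Function.update_of_ne hj,
      pi_midpoint_apply, midpoint_eq_smul_add]
    simp only [smul_eq_mul, invOf_eq_inv]
    ring

end Patch

theorem BS_eq_of_marginal_eq {n : ℕ} {f : (Fin n → ℝ) → ℝ} {x r : Fin n → ℝ} {i : Fin n}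
    (α : ℝ) (β : Fin n → ℝ)
    (h : ∀ S, i ∉ S → f (patch x r (insert i S)) - f (patch x r S) = α + β ⬝ᵥ patch x r S) :
    BS f x r i = α + β ⬝ᵥ Function.update (midpoint ℝ x r) i (r i) := by
  calc BS f x r i
      = ∑ S ∈ (univ.erase i).powerset, shapleyWeight n #S * (α + β ⬝ᵥ patch x r S) :=
        sum_congr rfl fun S hS => by
          rw [← h S fun hi => notMem_erase i univ (mem_powerset.mp hS hi)]; rfl
    _ = (∑ S ∈ (univ.erase i).powerset, shapleyWeight n #S) * α
          + β ⬝ᵥ ∑ S ∈ (univ.erase i).powerset, shapleyWeight n #S • patch x r S := by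
        simp only [mul_add, sum_add_distrib, sum_mul, dotProduct_sum, dotProduct_smul,
          smul_eq_mul]
    _ = α + β ⬝ᵥ Function.update (midpoint ℝ x r) i (r i) := by
        rw [sum_shapleyWeight_smul_patch, shapleyWeight_eq_card_erase i,
          sum_powerset_shapleyWeight, one_mul]

theorem hasFDerivAt_sum_comp_apply {ι : Type*} [Fintype ι] {g : ι → ℝ → ℝ} {x : ι → ℝ}
    (hg : ∀ p, DifferentiableAt ℝ (g p) (x p)) :
    HasFDerivAt (fun y : ι → ℝ => ∑ p, g p (y p))
      (∑ p, deriv (g p) (x p) • (ContinuousLinearMap.proj p : (ι → ℝ) →L[ℝ] ℝ)) x :=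
  HasFDerivAt.fun_sum fun p _ => (hg p).hasDerivAt.comp_hasFDerivAt x (hasFDerivAt_apply p x)

theorem hasFDerivAt_quadratic {ι : Type*} [Fintype ι] (m : ι → ι → ℝ) (x : ι → ℝ) :
    HasFDerivAt (fun y : ι → ℝ => ∑ p, ∑ q, m p q * y p * y q)
      (∑ p, ∑ q, m p q • (x p • (ContinuousLinearMap.proj q : (ι → ℝ) →L[ℝ] ℝ)
        + x q • (ContinuousLinearMap.proj p : (ι → ℝ) →L[ℝ] ℝ)))
      x := by
  refine HasFDerivAt.fun_sum fun p _ => HasFDerivAt.fun_sum fun q _ => ?_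
  simp_rw [mul_assoc]
  exact ((hasFDerivAt_apply p x).mul (hasFDerivAt_apply q x)).const_mul (m p q)

theorem fderiv_separable_plus_bilinear_apply_single {n : ℕ} (c : ℝ) {fs : Fin n → ℝ → ℝ}
    (hfs : ∀ p, Differentiable ℝ (fs p)) (m : Fin n → Fin n → ℝ) (x : Fin n → ℝ) (i : Fin n) :
    fderiv ℝ (fun y => c + ∑ p, fs p (y p) + ∑ p, ∑ q, m p q * y p * y q) x (Pi.single i 1)
      = deriv (fs i) (x i) + (fun j => m i j + m j i) ⬝ᵥ x := by
  rw [(((hasFDerivAt_sum_comp_apply fun p => (hfs p).differentiableAt).const_add c).fun_add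
    (hasFDerivAt_quadratic m x)).fderiv]
  simp [Pi.single_apply, dotProduct, mul_add, sum_add_distrib, mul_comm, add_comm]

theorem mul_integral_deriv_comp_segment {g : ℝ → ℝ} (hg : ContDiff ℝ 1 g) (u v : ℝ) :
    (v - u) * ∫ t in (0 : ℝ)..1, deriv g (u + t * (v - u)) = g v - g u := by
  have hseg : ∀ t ∈ Set.uIcc (0 : ℝ) 1, HasDerivAt (fun t => u + t * (v - u)) (v - u) t :=
    fun t _ => (hasDerivAt_mul_const (v - u)).const_add u
  have hsubst := intervalIntegral.integral_comp_mul_deriv hseg continuousOn_const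
    (hg.continuous_deriv le_rfl)
  simp only [Function.comp_def, zero_mul, one_mul, add_zero, add_sub_cancel] at hsubst
  rw [← intervalIntegral.integral_const_mul]
  simp_rw [mul_comm (v - u)]
  rw [hsubst, intervalIntegral.integral_deriv_eq_sub
    (fun x _ => (hg.differentiable one_ne_zero).differentiableAt)
    ((hg.continuous_deriv le_rfl).intervalIntegrable _ _)]

theorem integral_segment (u v : ℝ) :
    ∫ t in (0 : ℝ)..1, u + t * (v - u) = midpoint ℝ u v := by
  rw [intervalIntegral.integral_add intervalIntegrable_const
      ((by fun_prop : Continuous fun t : ℝ => t * (v - u)).intervalIntegrable _ _),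
    intervalIntegral.integral_mul_const, integral_id, midpoint_eq_smul_add]
  simp only [intervalIntegral.integral_const, smul_eq_mul, invOf_eq_inv]
  ring

theorem integral_dotProduct_segment {ι : Type*} [Fintype ι] (β a b : ι → ℝ) :
    ∫ t in (0 : ℝ)..1, β ⬝ᵥ (fun j => a j + t * (b j - a j)) = β ⬝ᵥ midpoint ℝ a b := by
  simp only [dotProduct]
  rw [intervalIntegral.integral_finsetSum fun j _ =>
    (by fun_prop : Continuous _).intervalIntegrable _ _]
  refine sum_congr rfl fun j _ => ?_
  rw [intervalIntegral.integral_const_mul, integral_segment, pi_midpoint_apply]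

theorem IG_separable_plus_bilinear {n : ℕ} (c : ℝ) {fs : Fin n → ℝ → ℝ}
    (hfs : ∀ p, ContDiff ℝ 1 (fs p)) (m : Fin n → Fin n → ℝ) (a b : Fin n → ℝ) (i : Fin n) :
    IG (fun x => c + ∑ p, fs p (x p) + ∑ p, ∑ q, m p q * x p * x q) a b i
      = fs i (b i) - fs i (a i) + (b i - a i) * ((fun j => m i j + m j i) ⬝ᵥ midpoint ℝ a b) := by
  rw [IG]
  simp_rw [fderiv_separable_plus_bilinear_apply_single c
    fun p => (hfs p).differentiable one_ne_zero]
  have hderiv : Continuous fun t : ℝ => deriv (fs i) (a i + t * (b i - a i)) :=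
    ((hfs i).continuous_deriv le_rfl).comp (by fun_prop)
  have hlinear : Continuous fun t : ℝ =>
      (fun j => m i j + m j i) ⬝ᵥ fun j => a j + t * (b j - a j) := by
    simp only [dotProduct]; fun_prop
  rw [intervalIntegral.integral_add (hderiv.intervalIntegrable _ _)
      (hlinear.intervalIntegrable _ _), mul_add, mul_integral_deriv_comp_segment (hfs i),
    integral_dotProduct_segment]

theorem BS_separable_plus_bilinear {n : ℕ} (c : ℝ) (fs : Fin n → ℝ → ℝ)
    (m : Fin n → Fin n → ℝ) (a b : Fin n → ℝ) (i : Fin n) :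
    BS (fun x => c + ∑ p, fs p (x p) + ∑ p, ∑ q, m p q * x p * x q) b a i
      = fs i (b i) - fs i (a i) + (b i - a i) * ((fun j => m i j + m j i) ⬝ᵥ midpoint ℝ a b) := by
  rw [BS_eq_of_marginal_eq (fs i (b i) - fs i (a i) + (b i - a i) ^ 2 * m i i)
    ((b i - a i) • fun j => m i j + m j i)]
  · rw [dotProduct_update, smul_dotProduct, midpoint_comm]
    simp only [Pi.smul_apply, pi_midpoint_apply, midpoint_eq_smul_add, smul_eq_mul, invOf_eq_inv]
    ring
  · intro S hS
    have hy : patch b a S i = a i := patch_apply_of_notMem b a hS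
    rw [patch_insert, smul_dotProduct, smul_eq_mul]
    calc _ = (∑ p, fs p (Function.update (patch b a S) i (b i) p) - ∑ p, fs p (patch b a S p))
          + (∑ p, ∑ q, m p q * Function.update (patch b a S) i (b i) p
              * Function.update (patch b a S) i (b i) q
            - ∑ p, ∑ q, m p q * patch b a S p * patch b a S q) := by ring
      _ = _ := by rw [sum_apply_update_sub, quadratic_update_sub, hy]; ring

theorem IG_eq_BS_of_separable_plus_bilinear_general (n : ℕ)
    (c : ℝ) (fs : Fin n → ℝ → ℝ) (hfs : ∀ i, ContDiff ℝ 1 (fs i))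
    (m : Fin n → Fin n → ℝ)
    (f : (Fin n → ℝ) → ℝ)
    (hf : f = fun x => c + ∑ i, fs i (x i) + ∑ i, ∑ j, m i j * x i * x j)
    (a b : Fin n → ℝ) (i : Fin n) :
    IG f a b i = BS f b a i := by
  subst hf
  rw [IG_separable_plus_bilinear c hfs, BS_separable_plus_bilinear]

theorem IG_eq_BS_of_separable_plus_bilinear (n : ℕ) (hn : 1 ≤ n)
    (c : ℝ) (fs : Fin n → ℝ → ℝ) (hfs : ∀ i, ContDiff ℝ 1 (fs i))
    (m : Fin n → Fin n → ℝ)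
    (f : (Fin n → ℝ) → ℝ)
    (hf : f = fun x => c + ∑ i, fs i (x i) + ∑ i, ∑ j, m i j * x i * x j)
    (a b : Fin n → ℝ) (i : Fin n) :
    IG f a b i = BS f b a i :=
  IG_eq_BS_of_separable_plus_bilinear_general n c fs hfs m f hf a b i
end

section
/- Let n ≥ 1 and m : Fin n → Fin n → ℝ, and define the bilinear model f(x) = ∑_{j} ∑_{k} m_{jk}·x_j·x_k. Then for all points a, b ∈ ℝⁿ and every feature i, the Integrated Gradients attribution along the straight-line path from a to b is given in closed form by IG_i(f,a,b) = (b_i − a_i) · ∑_{j} (m_{ij} + m_{ji})·(a_j + b_j)/2. -/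
/-! The partial derivatives of a quadratic form are linear functions, and the mean of a linear
function over a segment is its value at the midpoint `(a + b) / 2`. -/

open Finset

theorem integral_affine_unitInterval (u v : ℝ) :
    ∫ t in (0:ℝ)..1, u + t * (v - u) = (u + v) / 2 := by
  rw [intervalIntegral.integral_add intervalIntegrable_const
      ((continuous_mul_const (v - u)).intervalIntegrable 0 1),
    intervalIntegral.integral_mul_const, integral_id, intervalIntegral.integral_const]
  norm_num
  ring

theorem integral_sum_mul_segment {ι : Type*} [Fintype ι] (c a b : ι → ℝ) :
    ∫ t in (0:ℝ)..1, ∑ j, c j * (a j + t * (b j - a j)) = ∑ j, c j * (a j + b j) / 2 := by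
  rw [intervalIntegral.integral_finsetSum fun j _ =>
    Continuous.intervalIntegrable (by fun_prop) _ _]
  refine sum_congr rfl fun j _ => ?_
  rw [intervalIntegral.integral_const_mul, integral_affine_unitInterval, mul_div_assoc]

section Quadratic

variable {ι : Type*} [Fintype ι] (m : ι → ι → ℝ)

theorem fderiv_quadratic_apply (x v : ι → ℝ) :
    fderiv ℝ (fun x => ∑ j, ∑ k, m j k * x j * x k) x v
      = ∑ j, ∑ k, m j k * (v j * x k + x j * v k) := by
  have hasDeriv : HasFDerivAt (fun x : ι → ℝ => ∑ j, ∑ k, m j k * x j * x k)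
      (∑ j, ∑ k, ((m j k * x j) • (ContinuousLinearMap.proj k : (ι → ℝ) →L[ℝ] ℝ)
        + x k • m j k • (ContinuousLinearMap.proj j : (ι → ℝ) →L[ℝ] ℝ))) x :=
    HasFDerivAt.fun_sum fun j _ => HasFDerivAt.fun_sum fun k _ =>
      ((hasFDerivAt_apply j x).const_mul (m j k)).mul (hasFDerivAt_apply k x)
  rw [hasDeriv.fderiv]
  simp only [_root_.sum_apply, add_apply, smul_apply, ContinuousLinearMap.proj_apply, smul_eq_mul]
  refine sum_congr rfl fun j _ => sum_congr rfl fun k _ => ?_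
  ring

theorem fderiv_quadratic_single [DecidableEq ι] (x : ι → ℝ) (i : ι) :
    fderiv ℝ (fun x => ∑ j, ∑ k, m j k * x j * x k) x (Pi.single i 1)
      = ∑ j, (m i j + m j i) * x j := by
  simp [fderiv_quadratic_apply, Pi.single_apply, mul_add, add_mul, sum_add_distrib]

end Quadratic

theorem IG_bilinear_closed_form_general (n : ℕ) (m : Fin n → Fin n → ℝ)
    (f : (Fin n → ℝ) → ℝ)
    (hf : f = fun x => ∑ j, ∑ k, m j k * x j * x k)
    (a b : Fin n → ℝ) (i : Fin n) :
    IG f a b i = (b i - a i) * ∑ j, (m i j + m j i) * (a j + b j) / 2 := by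
  subst hf
  simp only [IG, fderiv_quadratic_single, integral_sum_mul_segment]

theorem IG_bilinear_closed_form (n : ℕ) (hn : 1 ≤ n) (m : Fin n → Fin n → ℝ)
    (f : (Fin n → ℝ) → ℝ)
    (hf : f = fun x => ∑ j, ∑ k, m j k * x j * x k)
    (a b : Fin n → ℝ) (i : Fin n) :
    IG f a b i = (b i - a i) * ∑ j, (m i j + m j i) * (a j + b j) / 2 :=
  IG_bilinear_closed_form_general n m f hf a b i
end

section
/- Integrated Gradients satisfies the efficiency (completeness) axiom: if f : (Fin n → ℝ) → ℝ is continuously differentiable, then for all points a, b ∈ ℝⁿ, the attributions sum to the score difference: ∑_{i ∈ Fin n} IG_i(f,a,b) = f(b) − f(a). -/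
/-! Summing the attributions recombines the partial derivatives into the directional derivative
along `b - a`, and integrating that along the segment from `a` to `b` is the fundamental theorem
of calculus for `t ↦ f (a + t • (b - a))`. -/

open MeasureTheory intervalIntegral

theorem ContDiff.integral_fderiv_segment_eq_sub {E F : Type*} [NormedAddCommGroup E]
    [NormedSpace ℝ E] [NormedAddCommGroup F] [NormedSpace ℝ F] [CompleteSpace F] {f : E → F}
    (hf : ContDiff ℝ 1 f) (a b : E) :
    ∫ t in (0:ℝ)..1, fderiv ℝ f (a + t • (b - a)) (b - a) = f b - f a := by
  have hpath : ∀ t : ℝ, HasDerivAt (fun s : ℝ => a + s • (b - a)) (b - a) t := fun t => by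
    simpa using ((hasDerivAt_id t).smul_const (b - a)).const_add a
  have hderiv : ∀ t : ℝ,
      HasDerivAt (fun s => f (a + s • (b - a))) (fderiv ℝ f (a + t • (b - a)) (b - a)) t :=
    fun t => ((hf.differentiable one_ne_zero _).hasFDerivAt).comp_hasDerivAt t (hpath t)
  have hcont : Continuous fun t : ℝ => fderiv ℝ f (a + t • (b - a)) (b - a) := by
    have := hf.continuous_fderiv one_ne_zero
    fun_prop
  rw [integral_eq_sub_of_hasDerivAt (fun t _ => hderiv t) (hcont.intervalIntegrable 0 1)]
  simp

theorem sum_IG_eq_integral_fderiv {n : ℕ} {f : (Fin n → ℝ) → ℝ}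
    (hf : Continuous (fderiv ℝ f)) (a b : Fin n → ℝ) :
    ∑ i, IG f a b i = ∫ t in (0:ℝ)..1, fderiv ℝ f (a + t • (b - a)) (b - a) := by
  have hint : ∀ i, IntervalIntegrable
      (fun t : ℝ => (b i - a i) * fderiv ℝ f (a + t • (b - a)) (Pi.single i 1)) volume 0 1 :=
    fun i => Continuous.intervalIntegrable (by fun_prop) 0 1
  simp only [IG, ← intervalIntegral.integral_const_mul]
  change ∑ i, ∫ t in (0:ℝ)..1, (b i - a i) * fderiv ℝ f (a + t • (b - a)) (Pi.single i 1) = _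
  rw [← integral_finsetSum fun i _ => hint i]
  refine integral_congr fun t _ => ?_
  set L := fderiv ℝ f (a + t • (b - a))
  conv_rhs => rw [pi_eq_sum_univ' (b - a), map_sum]
  simp only [map_smul, smul_eq_mul, Pi.sub_apply]

theorem IG_efficiency_general (n : ℕ) (f : (Fin n → ℝ) → ℝ)
    (hf : ContDiff ℝ 1 f) (a b : Fin n → ℝ) :
    ∑ i, IG f a b i = f b - f a := by
  rw [sum_IG_eq_integral_fderiv (hf.continuous_fderiv one_ne_zero),
    hf.integral_fderiv_segment_eq_sub]

theorem IG_efficiency (n : ℕ) (hn : 1 ≤ n) (f : (Fin n → ℝ) → ℝ)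
    (hf : ContDiff ℝ 1 f) (a b : Fin n → ℝ) :
    ∑ i, IG f a b i = f b - f a :=
  IG_efficiency_general n f hf a b
end

section
/- Integrated Gradients satisfies the dummy axiom: if f : (Fin n → ℝ) → ℝ is continuously differentiable and does not depend on coordinate i, i.e. f(x) = f(y) whenever x_j = y_j for all j ≠ i, then IG_i(f,a,b) = 0 for all points a, b ∈ ℝⁿ. -/
section

variable {𝕜 : Type*} [NontriviallyNormedField 𝕜] {E F : Type*} [NormedAddCommGroup E]
  [NormedSpace 𝕜 E] [NormedAddCommGroup F] [NormedSpace 𝕜 F]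

theorem fderiv_apply_eq_zero_of_forall_add_smul_eq {f : E → F} {x v : E}
    (hconst : ∀ t : 𝕜, f (x + t • v) = f x) : fderiv 𝕜 f x v = 0 := by
  by_cases hf : DifferentiableAt 𝕜 f x
  · rw [← hf.lineDeriv_eq_fderiv, lineDeriv, funext hconst, deriv_const]
  · rw [fderiv_zero_of_not_differentiableAt hf, zero_apply]

theorem fderiv_apply_single_eq_zero_of_forall_eq {ι : Type*} [Fintype ι] [DecidableEq ι]
    {f : (ι → 𝕜) → F} {i : ι} (hdummy : ∀ x y : ι → 𝕜, (∀ j, j ≠ i → x j = y j) → f x = f y)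
    (x : ι → 𝕜) : fderiv 𝕜 f x (Pi.single i 1) = 0 :=
  fderiv_apply_eq_zero_of_forall_add_smul_eq fun t =>
    hdummy _ _ fun j hj => by simp [Pi.single_eq_of_ne hj]

end

theorem IG_dummy_general (n : ℕ) (f : (Fin n → ℝ) → ℝ) (i : Fin n)
    (hdummy : ∀ x y : Fin n → ℝ, (∀ j, j ≠ i → x j = y j) → f x = f y)
    (a b : Fin n → ℝ) :
    IG f a b i = 0 := by
  simp only [IG, fderiv_apply_single_eq_zero_of_forall_eq hdummy, intervalIntegral.integral_zero,
    mul_zero]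

theorem IG_dummy (n : ℕ) (f : (Fin n → ℝ) → ℝ) (hf : ContDiff ℝ 1 f) (i : Fin n)
    (hdummy : ∀ x y : Fin n → ℝ, (∀ j, j ≠ i → x j = y j) → f x = f y)
    (a b : Fin n → ℝ) :
    IG f a b i = 0 :=
  IG_dummy_general n f i hdummy a b
end

section
/- Inverse-ordering path cancellation for bilinear models: let m : Fin n → Fin n → ℝ and f(x) = ∑_{j} ∑_{k} m_{jk}·x_j·x_k. For a permutation σ of Fin n, feature i, and points a, b ∈ ℝⁿ, define the marginal contribution of i under σ as M_i(σ) = f(patch(b,a,Pre_σ(i) ∪ {i})) − f(patch(b,a,Pre_σ(i))), where Pre_σ(i) = { j : σ⁻¹(j) < σ⁻¹(i) } and patch(b,a,S) has j-th coordinate b_j for j ∈ S and a_j otherwise. Let σ̄ be the reversed ordering of σ (so Pre_{σ̄}(i) = { j : σ⁻¹(j) > σ⁻¹(i) }). Then for every σ and every i, M_i(σ) + M_i(σ̄) = 2·IG_i(f,a,b). -/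
/-- Features strictly preceding `i` in the ordering `σ`. -/
def pre {n : ℕ} (σ : Equiv.Perm (Fin n)) (i : Fin n) : Finset (Fin n) :=
  Finset.univ.filter (fun j => σ.symm j < σ.symm i)

/-- Features strictly preceding `i` in the reversed ordering of `σ`. -/
def preRev {n : ℕ} (σ : Equiv.Perm (Fin n)) (i : Fin n) : Finset (Fin n) :=
  Finset.univ.filter (fun j => σ.symm i < σ.symm j)

/-!
For the bilinear model `Q x = ∑ j k, M j k * x j * x k` the partial derivative `∂ᵢQ` is the linear
functional `x ↦ ((M + Mᵀ) *ᵥ x) i`. Since `Q` is quadratic, changing only coordinate `i` from `z i`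
to `y i` changes `Q` by exactly `(y i - z i) * ∂ᵢQ ((y + z) / 2)`, and integrating the affine map
`t ↦ ∂ᵢQ (a + t • (b - a))` gives `IGᵢ = (b i - a i) * ∂ᵢQ ((a + b) / 2)`. The predecessor sets of
`i` under `σ` and its reversal are complementary in the complement of `{i}`, so the four patched
points of the two marginal contributions add up to `2 • (a + b)`, and linearity of `∂ᵢQ` finishes.
-/

section BilinearModel

open Matrix

variable {ι : Type*} [Fintype ι] [DecidableEq ι] (M : Matrix ι ι ℝ)

def bilinearModel (x : ι → ℝ) : ℝ :=
  ∑ j, ∑ k, M j k * x j * x k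

theorem fderiv_bilinearModel_apply_single (p : ι → ℝ) (i : ι) :
    fderiv ℝ (bilinearModel M) p (Pi.single i 1) = ((M + Mᵀ) *ᵥ p) i := by
  have hderiv : HasFDerivAt (bilinearModel M)
      (∑ j, ∑ k, M j k • (p j • ContinuousLinearMap.proj (R := ℝ) (φ := fun _ : ι => ℝ) k
        + p k • ContinuousLinearMap.proj j)) p := by
    refine HasFDerivAt.fun_sum fun j _ => HasFDerivAt.fun_sum fun k _ => ?_
    simpa [mul_assoc] using
      ((hasFDerivAt_apply j p).mul (hasFDerivAt_apply k p)).const_mul (M j k)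
  simp only [hderiv.fderiv, smul_add, Finset.sum_add_distrib, _root_.add_apply, _root_.sum_apply,
    _root_.smul_apply, ContinuousLinearMap.proj_apply, Pi.single_apply, smul_eq_mul, mul_ite, mul_one,
    mul_zero, Finset.sum_ite_eq', Finset.mem_univ, ↓reduceIte, Finset.sum_ite_irrel,
    Finset.sum_const_zero, mulVec, dotProduct, Matrix.add_apply, transpose_apply, add_mul]
  exact add_comm _ _

theorem bilinearModel_sub_of_eq_of_ne {y z : ι → ℝ} {i : ι} (h : ∀ j ≠ i, y j = z j) :
    bilinearModel M y - bilinearModel M z = (y i - z i) * ((M + Mᵀ) *ᵥ (y + z)) i / 2 := by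
  have hdiff : ∀ j, y j - z j = (Pi.single i (y i - z i) : ι → ℝ) j := by
    intro j
    rcases eq_or_ne j i with rfl | hj
    · simp
    · simp [h j hj, hj]
  calc bilinearModel M y - bilinearModel M z
      = (∑ j, ∑ k, M j k * ((y j - z j) * (y k + z k) + (y j + z j) * (y k - z k))) / 2 := by
        simp only [bilinearModel, ← Finset.sum_sub_distrib, Finset.sum_div]
        exact Finset.sum_congr rfl fun j _ => Finset.sum_congr rfl fun k _ => by ring
    _ = (y i - z i) * ((M + Mᵀ) *ᵥ (y + z)) i / 2 := by
        generalize y i - z i = c at hdiff ⊢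
        simp only [hdiff]
        simp only [Pi.single_apply, mul_add, ite_mul, zero_mul, mul_ite, add_mul, mul_zero,
          Finset.sum_add_distrib, Finset.sum_ite_irrel, Finset.sum_const_zero, Finset.sum_ite_eq',
          Finset.mem_univ, ↓reduceIte, mulVec, dotProduct, Matrix.add_apply, transpose_apply, Pi.add_apply,
          ne_eq, OfNat.ofNat_ne_zero, not_false_eq_true, div_left_inj']
        simp only [mul_comm (y _) c, mul_comm (z _) c, mul_left_comm _ c, ← Finset.mul_sum]
        ring

end BilinearModel

theorem integral_linearMap_add_smul_sub {E : Type*} [AddCommGroup E] [Module ℝ E]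
    (L : E →ₗ[ℝ] ℝ) (a b : E) :
    ∫ t in (0 : ℝ)..1, L (a + t • (b - a)) = L (a + b) / 2 := by
  simp only [map_add, map_smul, map_sub, smul_eq_mul]
  rw [intervalIntegral.integral_add (f := fun _ => L a) (g := fun t => t * (L b - L a))
    intervalIntegrable_const ((continuous_id.mul continuous_const).intervalIntegrable 0 1)]
  simp [intervalIntegral.integral_mul_const, integral_id]
  ring

section Patch

open Matrix

variable {n : ℕ}

theorem patch_add_patch_compl (x r : Fin n → ℝ) (S : Finset (Fin n)) :
    patch x r S + patch x r Sᶜ = x + r := by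
  ext j
  by_cases hj : j ∈ S <;> simp [patch, hj, add_comm]

theorem insert_pre_eq_compl_preRev (σ : Equiv.Perm (Fin n)) (i : Fin n) :
    insert i (pre σ i) = (preRev σ i)ᶜ := by
  ext j
  simp only [pre, preRev, Finset.mem_insert, Finset.mem_filter, Finset.mem_univ, true_and,
    Finset.mem_compl, not_lt, le_iff_lt_or_eq, ← σ.symm.injective.eq_iff (a := j)]
  tauto

theorem insert_preRev_eq_compl_pre (σ : Equiv.Perm (Fin n)) (i : Fin n) :
    insert i (preRev σ i) = (pre σ i)ᶜ := by
  ext j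
  simp only [pre, preRev, Finset.mem_insert, Finset.mem_filter, Finset.mem_univ, true_and,
    Finset.mem_compl, not_lt, le_iff_lt_or_eq, ← σ.symm.injective.eq_iff (a := j)]
  tauto

theorem IG_bilinearModel (M : Matrix (Fin n) (Fin n) ℝ) (a b : Fin n → ℝ) (i : Fin n) :
    IG (bilinearModel M) a b i = (b i - a i) * ((M + Mᵀ) *ᵥ (a + b)) i / 2 := by
  simp only [IG, fderiv_bilinearModel_apply_single, mul_div_assoc]
  congr 1
  exact integral_linearMap_add_smul_sub ((LinearMap.proj i).comp (M + Mᵀ).mulVecLin) a b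

theorem bilinearModel_patch_insert_sub (M : Matrix (Fin n) (Fin n) ℝ) (a b : Fin n → ℝ)
    {S : Finset (Fin n)} {i : Fin n} (hi : i ∉ S) :
    bilinearModel M (patch b a (insert i S)) - bilinearModel M (patch b a S)
      = (b i - a i) * ((M + Mᵀ) *ᵥ (patch b a (insert i S) + patch b a S)) i / 2 := by
  rw [bilinearModel_sub_of_eq_of_ne M (i := i) fun j hj => by simp [patch, hj]]
  simp [patch, hi]

theorem bilinearModel_marginal_add_marginal (M : Matrix (Fin n) (Fin n) ℝ) (a b : Fin n → ℝ)
    {S T : Finset (Fin n)} {i : Fin n} (hST : insert i S = Tᶜ) (hTS : insert i T = Sᶜ) :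
    (bilinearModel M (patch b a (insert i S)) - bilinearModel M (patch b a S))
      + (bilinearModel M (patch b a (insert i T)) - bilinearModel M (patch b a T))
      = (b i - a i) * ((M + Mᵀ) *ᵥ (a + b)) i := by
  have hS : i ∉ S := Finset.mem_compl.1 (hTS ▸ Finset.mem_insert_self i T)
  have hT : i ∉ T := Finset.mem_compl.1 (hST ▸ Finset.mem_insert_self i S)
  have hsum : patch b a (insert i S) + patch b a S + (patch b a (insert i T) + patch b a T)
      = (2 : ℝ) • (a + b) := by
    rw [hST, hTS]
    calc _ = patch b a S + patch b a Sᶜ + (patch b a T + patch b a Tᶜ) := by abel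
      _ = (2 : ℝ) • (a + b) := by
        rw [patch_add_patch_compl, patch_add_patch_compl, two_smul, add_comm b a]
  rw [bilinearModel_patch_insert_sub M a b hS, bilinearModel_patch_insert_sub M a b hT,
    mul_div_assoc, mul_div_assoc, ← mul_add, ← add_div, ← Pi.add_apply, ← mulVec_add, hsum,
    mulVec_smul, Pi.smul_apply, smul_eq_mul]
  ring

end Patch

theorem inverse_ordering_cancellation (n : ℕ) (m : Fin n → Fin n → ℝ)
    (f : (Fin n → ℝ) → ℝ)
    (hf : f = fun x => ∑ j, ∑ k, m j k * x j * x k)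
    (a b : Fin n → ℝ) (σ : Equiv.Perm (Fin n)) (i : Fin n) :
    (f (patch b a (insert i (pre σ i))) - f (patch b a (pre σ i))) +
      (f (patch b a (insert i (preRev σ i))) - f (patch b a (preRev σ i)))
      = 2 * IG f a b i := by
  obtain rfl : f = bilinearModel (Matrix.of m) := hf
  rw [bilinearModel_marginal_add_marginal (Matrix.of m) a b (insert_pre_eq_compl_preRev σ i)
    (insert_preRev_eq_compl_pre σ i), IG_bilinearModel]
  ring
end

section
/- Interventional Shapley values satisfy the symmetry axiom: let f : (Fin n → ℝ) → ℝ be a model, i ≠ j features, and suppose f is invariant under swapping coordinates i and j, i.e. f(x ∘ swap(i,j)) = f(x) for all x ∈ ℝⁿ, where swap(i,j) is the transposition of i and j on Fin n. Then for all points x, r ∈ ℝⁿ with x_i = x_j and r_i = r_j, the attributions agree: BS_i(f,x,r) = BS_j(f,x,r). -/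
theorem BS_symmetry (n : ℕ) (f : (Fin n → ℝ) → ℝ) (i j : Fin n) (hij : i ≠ j)
    (hsym : ∀ x : Fin n → ℝ, f (x ∘ Equiv.swap i j) = f x)
    (x r : Fin n → ℝ) (hx : x i = x j) (hr : r i = r j) :
    BS f x r i = BS f x r j := by
  classical
  set σ := Equiv.swap i j with hσ
  have hxk : ∀ k, x (σ k) = x k := by
    intro k
    rcases eq_or_ne k i with rfl | hki
    · simpa [hσ] using hx.symm
    rcases eq_or_ne k j with rfl | hkj
    · simpa [hσ] using hx
    · simp [hσ, Equiv.swap_apply_of_ne_of_ne hki hkj]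
  have hrk : ∀ k, r (σ k) = r k := by
    intro k
    rcases eq_or_ne k i with rfl | hki
    · simpa [hσ] using hr.symm
    rcases eq_or_ne k j with rfl | hkj
    · simpa [hσ] using hr
    · simp [hσ, Equiv.swap_apply_of_ne_of_ne hki hkj]
  have key : ∀ S : Finset (Fin n),
      f (patch x r (S.map σ.toEmbedding)) = f (patch x r S) := by
    intro S
    have : patch x r (S.map σ.toEmbedding) ∘ σ = patch x r S := by
      funext k
      have hmem : σ k ∈ S.map σ.toEmbedding ↔ k ∈ S := by
        simp [Finset.mem_map_equiv, hσ]
      simp only [patch, Function.comp]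
      rw [if_congr hmem rfl rfl, hxk, hrk]
    rw [← hsym (patch x r (S.map σ.toEmbedding)), this]
  unfold BS
  refine Finset.sum_nbij' (fun S => S.map σ.toEmbedding)
    (fun S => S.map σ.toEmbedding) ?_ ?_ ?_ ?_ ?_
  · intro S hS
    simp only [Finset.mem_powerset, Finset.subset_erase] at hS ⊢
    constructor
    · exact fun a _ => Finset.mem_univ a
    · intro hjmem
      rw [Finset.mem_map_equiv] at hjmem
      have : σ.symm j = i := by simp [hσ]
      rw [this] at hjmem
      exact hS.2 hjmem
  · intro S hS
    simp only [Finset.mem_powerset, Finset.subset_erase] at hS ⊢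
    constructor
    · exact fun a _ => Finset.mem_univ a
    · intro himem
      rw [Finset.mem_map_equiv] at himem
      have : σ.symm i = j := by simp [hσ]
      rw [this] at himem
      exact hS.2 himem
  · intro S _
    ext k
    simp [Finset.mem_map_equiv, hσ]
  · intro S _
    ext k
    simp [Finset.mem_map_equiv, hσ]
  · intro S _
    have hcard : (S.map σ.toEmbedding).card = S.card := Finset.card_map _
    have hins : (insert i S).map σ.toEmbedding = insert j (S.map σ.toEmbedding) := by
      rw [Finset.map_insert]
      simp [hσ]
    rw [hcard, ← hins, key, key]
end

section
/- Integrated Gradients satisfies the symmetry axiom: let f : (Fin n → ℝ) → ℝ be continuously differentiable, i ≠ j features, and suppose f is invariant under swapping coordinates i and j, i.e. f(x ∘ swap(i,j)) = f(x) for all x ∈ ℝⁿ, where swap(i,j) is the transposition of i and j on Fin n. Then for all points a, b ∈ ℝⁿ with a_i = a_j and b_i = b_j, the straight-line path attributions agree: IG_i(f,a,b) = IG_j(f,a,b). -/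
/-!
The transposition `P : x ↦ x ∘ swap i j` is a linear automorphism of `ℝⁿ` with `f ∘ P = f`, and it
fixes every point of the segment from `a` to `b` because `a i = a j` and `b i = b j`. At such a
point `x` the chain rule gives `Df(x) ∘ P = Df(x)`; since `P` sends `e_i` to `e_j`, the partial
derivatives `∂_i f` and `∂_j f` agree along the whole segment, so the two integrals coincide.
-/

theorem Function.comp_swap_eq_self {α β : Type*} [DecidableEq α] {x : α → β} {i j : α}
    (h : x i = x j) : x ∘ Equiv.swap i j = x := by
  funext k
  rw [Function.comp_apply, Equiv.swap_apply_def]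
  split_ifs with hki hkj
  · rw [hki, h]
  · rw [hkj, h]
  · rfl

theorem ContinuousLinearEquiv.fderiv_comp_eq_of_comp_eq {𝕜 E F : Type*}
    [NontriviallyNormedField 𝕜] [NormedAddCommGroup E] [NormedSpace 𝕜 E] [NormedAddCommGroup F]
    [NormedSpace 𝕜 F] {f : E → F} {x : E} (L : E ≃L[𝕜] E) (hf : f ∘ L = f) (hx : L x = x) :
    (fderiv 𝕜 f x).comp (L : E →L[𝕜] E) = fderiv 𝕜 f x := by
  rw [← hx, ← L.comp_right_fderiv, hf, hx]

def ContinuousLinearEquiv.funCongrLeft (R M : Type*) {m n : Type*} [Semiring R] [AddCommMonoid M]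
    [Module R M] [TopologicalSpace M] (e : m ≃ n) : (n → M) ≃L[R] (m → M) :=
  { LinearEquiv.funCongrLeft R M e with
    continuous_toFun := continuous_pi fun _ => continuous_apply _
    continuous_invFun := continuous_pi fun _ => continuous_apply _ }

section

variable {𝕜 ι F : Type*} [NontriviallyNormedField 𝕜] [Fintype ι] [NormedAddCommGroup F]
  [NormedSpace 𝕜 F] {f : (ι → 𝕜) → F} {x : ι → 𝕜}

theorem fderiv_apply_comp_perm_of_comp_perm_eq (σ : Equiv.Perm ι) (hf : ∀ y, f (y ∘ σ) = f y)
    (hx : x ∘ σ = x) (v : ι → 𝕜) : fderiv 𝕜 f x (v ∘ σ) = fderiv 𝕜 f x v :=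
  DFunLike.congr_fun
    ((ContinuousLinearEquiv.funCongrLeft 𝕜 𝕜 σ).fderiv_comp_eq_of_comp_eq (funext hf) hx) v

theorem fderiv_apply_single_eq_of_comp_swap_eq [DecidableEq ι] {i j : ι}
    (hf : ∀ y, f (y ∘ Equiv.swap i j) = f y) (hx : x i = x j) :
    fderiv 𝕜 f x (Pi.single i 1) = fderiv 𝕜 f x (Pi.single j 1) := by
  have h := fderiv_apply_comp_perm_of_comp_perm_eq _ hf (Function.comp_swap_eq_self hx)
    (Pi.single i (1 : 𝕜))
  rwa [Pi.single_comp_equiv, Equiv.symm_swap, Equiv.swap_apply_left, eq_comm] at h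

end

theorem IG_symmetry_general (n : ℕ) (f : (Fin n → ℝ) → ℝ)
    (i j : Fin n)
    (hsym : ∀ x : Fin n → ℝ, f (x ∘ Equiv.swap i j) = f x)
    (a b : Fin n → ℝ) (ha : a i = a j) (hb : b i = b j) :
    IG f a b i = IG f a b j := by
  unfold IG
  rw [ha, hb]
  congr 1
  refine intervalIntegral.integral_congr fun t _ => ?_
  exact fderiv_apply_single_eq_of_comp_swap_eq hsym (by simp only [ha, hb])

theorem IG_symmetry (n : ℕ) (f : (Fin n → ℝ) → ℝ) (hf : ContDiff ℝ 1 f)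
    (i j : Fin n) (hij : i ≠ j)
    (hsym : ∀ x : Fin n → ℝ, f (x ∘ Equiv.swap i j) = f x)
    (a b : Fin n → ℝ) (ha : a i = a j) (hb : b i = b j) :
    IG f a b i = IG f a b j :=
  IG_symmetry_general n f i j hsym a b ha hb
end

section
/- For a feature-separable continuously differentiable model, Integrated Gradients attributions reduce to coordinate-wise score differences: let c ∈ ℝ, f_j : ℝ → ℝ continuously differentiable for each j ∈ Fin n, and f(x) = c + ∑_{j} f_j(x_j). Then for all points a, b ∈ ℝⁿ and every feature i, IG_i(f,a,b) = f_i(b_i) − f_i(a_i). -/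
/-! The partial derivative of `c + ∑ j, f_j (x j)` in direction `i` is `f_i' (x i)`, so the
integrand of `IG_i` is the chain-rule derivative of `t ↦ f_i (a_i + t (b_i - a_i))` divided by
`b_i - a_i`, and the fundamental theorem of calculus finishes. -/

open ContinuousLinearMap

section Separable

variable {𝕜 : Type*} [NontriviallyNormedField 𝕜] {ι : Type*} [Fintype ι]
  {F : Type*} [NormedAddCommGroup F] [NormedSpace 𝕜 F]

theorem hasFDerivAt_sum_comp_apply_s18 {g : ι → 𝕜 → F} {g' : ι → F} {x : ι → 𝕜}
    (hg : ∀ j, HasDerivAt (g j) (g' j) (x j)) :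
    HasFDerivAt (fun y : ι → 𝕜 => ∑ j, g j (y j))
      (∑ j, (toSpanSingleton 𝕜 (g' j)).comp (proj j)) x :=
  HasFDerivAt.fun_sum fun j _ => (hg j).hasFDerivAt.comp x (hasFDerivAt_apply (𝕜 := 𝕜) j x)

theorem fderiv_sum_comp_apply_single [DecidableEq ι] {g : ι → 𝕜 → F} {x : ι → 𝕜}
    (hg : ∀ j, DifferentiableAt 𝕜 (g j) (x j)) (i : ι) :
    fderiv 𝕜 (fun y : ι → 𝕜 => ∑ j, g j (y j)) x (Pi.single i 1) = deriv (g i) (x i) := by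
  rw [(hasFDerivAt_sum_comp_apply_s18 fun j => (hg j).hasDerivAt).fderiv]
  simp [Pi.single_apply]

end Separable

theorem smul_integral_deriv_along_segment {E : Type*} [NormedAddCommGroup E] [NormedSpace ℝ E]
    [CompleteSpace E] {g : ℝ → E} (hg : ContDiff ℝ 1 g) (a b : ℝ) :
    (b - a) • ∫ t in (0 : ℝ)..1, deriv g (a + t * (b - a)) = g b - g a := by
  have hline : ∀ t : ℝ, HasDerivAt (fun t => a + t * (b - a)) (b - a) t := fun t => by
    simpa using ((hasDerivAt_id t).mul_const (b - a)).const_add a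
  have hderiv : ∀ t : ℝ, HasDerivAt (fun t => g (a + t * (b - a)))
      ((b - a) • deriv g (a + t * (b - a))) t := fun t =>
    ((hg.differentiable one_ne_zero _).hasDerivAt).scomp t (hline t)
  have hcont : Continuous fun t : ℝ => (b - a) • deriv g (a + t * (b - a)) :=
    ((hg.continuous_deriv le_rfl).comp (by fun_prop)).const_smul _
  rw [← intervalIntegral.integral_smul,
    intervalIntegral.integral_eq_sub_of_hasDerivAt (fun t _ => hderiv t)
      (hcont.intervalIntegrable _ _)]
  simp

theorem IG_separable (n : ℕ) (c : ℝ) (fs : Fin n → ℝ → ℝ)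
    (hfs : ∀ j, ContDiff ℝ 1 (fs j))
    (f : (Fin n → ℝ) → ℝ) (hf : f = fun x => c + ∑ j, fs j (x j))
    (a b : Fin n → ℝ) (i : Fin n) :
    IG f a b i = fs i (b i) - fs i (a i) := by
  have hdiff : ∀ j y, DifferentiableAt ℝ (fs j) y := fun j => (hfs j).differentiable one_ne_zero
  subst hf
  simp only [IG, fderiv_const_add, fderiv_sum_comp_apply_single fun j => hdiff j _]
  exact smul_integral_deriv_along_segment (hfs i) (a i) (b i)
end
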